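/- arXiv:1710.01599 — 2 statements merged into one kernel-verified Lean document; each statement's English description precedes it below -/
import Mathlib

section
/- Let A be a unital C*-algebra, B a unital C*-algebra, and Λ : A → B a unital linear map. Then Λ is a Schwarz map (i.e., Λ(a*) = Λ(a)* and Λ(a* a) ≥ Λ(a)* Λ(a) for all a ∈ A) if and only if for every a ∈ A the 2×2 matrix with entries [[Λ(a* a), Λ(a*)], [Λ(a), 1]] is positive in M₂(B). -/
/-!
Positivity of `[[x, b*], [b, 1]]` in `M₂(B)` is the Schur-complement condition `b* b ≤ x`.
If `x - b* b = d* d` (a square root exists in a C*-algebra), then `C = [[d, 0], [b, 1]]` gives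
`Cᴴ C = [[x, b*], [b, 1]]`; conversely, evaluating the positive form `Cᴴ C` at the vector
`(1, -b)` gives `x - b* b ≥ 0`. Since `Cᴴ C` is Hermitian, the off-diagonal entries
`Λ(a*)` and `Λ(a)` of the theorem's matrix are adjoint to each other.
-/

open Matrix

namespace Matrix

variable {R : Type*} [Ring R] [StarRing R]

theorem conjTranspose_mul_self_of_lowerTriangular_fin_two (d b : R) :
    !![d, 0; b, 1]ᴴ * !![d, 0; b, 1] = !![star d * d + star b * b, star b; b, 1] := by
  ext i j
  fin_cases i <;> fin_cases j <;> simp [mul_apply]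

theorem star_dotProduct_fin_two_mulVec (x b : R) :
    star ![1, -b] ⬝ᵥ (!![x, star b; b, 1] *ᵥ ![1, -b]) = x - star b * b := by
  simp only [dotProduct, mulVec, Fin.sum_univ_two, Pi.star_apply, of_apply, cons_val_zero,
    cons_val_one, cons_val_fin_one, star_one, star_neg]
  noncomm_ring

theorem PosSemidef.star_mul_self_le_of_fin_two [PartialOrder R] [StarOrderedRing R] {x b : R}
    (h : (!![x, star b; b, 1] : Matrix (Fin 2) (Fin 2) R).PosSemidef) : star b * b ≤ x :=
  sub_nonneg.1 (star_dotProduct_fin_two_mulVec x b ▸ h.dotProduct_mulVec_nonneg ![1, -b])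

end Matrix

theorem CStarAlgebra.exists_fin_two_eq_conjTranspose_mul_self_iff {B : Type*} [CStarAlgebra B]
    [PartialOrder B] [StarOrderedRing B] {x b : B} :
    (∃ C : Matrix (Fin 2) (Fin 2) B, !![x, star b; b, 1] = Cᴴ * C) ↔ star b * b ≤ x := by
  constructor
  · rintro ⟨C, hC⟩
    exact (hC ▸ posSemidef_conjTranspose_mul_self C).star_mul_self_le_of_fin_two
  · intro h
    obtain ⟨d, hd⟩ := CStarAlgebra.nonneg_iff_eq_star_mul_self.1 (sub_nonneg.2 h)
    exact ⟨!![d, 0; b, 1], by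
      rw [conjTranspose_mul_self_of_lowerTriangular_fin_two, ← hd, sub_add_cancel]⟩

theorem schwarz_iff_two_by_two_matrix_positive_general
    {A B : Type*} [CStarAlgebra A] [CStarAlgebra B]
    [PartialOrder B] [StarOrderedRing B]
    (Λ : A →ₗ[ℂ] B) :
    ((∀ a : A, Λ (star a) = star (Λ a)) ∧
        ∀ a : A, star (Λ a) * Λ a ≤ Λ (star a * a)) ↔
      ∀ a : A, ∃ C : Matrix (Fin 2) (Fin 2) B,
        !![Λ (star a * a), Λ (star a); Λ a, 1] = C.conjTranspose * C := by
  constructor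
  · rintro ⟨hstar, hschwarz⟩ a
    rw [hstar a]
    exact CStarAlgebra.exists_fin_two_eq_conjTranspose_mul_self_iff.2 (hschwarz a)
  · intro hpos
    have hstar (a : A) : Λ (star a) = star (Λ a) := by
      obtain ⟨C, hC⟩ := hpos a
      simpa [← hC] using ((posSemidef_conjTranspose_mul_self C).isHermitian.apply 0 1).symm
    refine ⟨hstar, fun a => ?_⟩
    have hposa := hpos a
    rw [hstar a] at hposa
    exact CStarAlgebra.exists_fin_two_eq_conjTranspose_mul_self_iff.1 hposa

/-- A unital linear map `Λ` between unital C*-algebras is a Schwarz map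
iff for every `a` the 2×2 matrix `[[Λ(a* a), Λ(a*)], [Λ(a), 1]]` is positive in `M₂(B)`,
where positivity of a matrix `P` over a C*-algebra means `P = Cᴴ * C` for some `C`. -/
theorem schwarz_iff_two_by_two_matrix_positive
    {A B : Type*} [CStarAlgebra A] [CStarAlgebra B]
    [PartialOrder B] [StarOrderedRing B]
    (Λ : A →ₗ[ℂ] B) (hunital : Λ 1 = 1) :
    ((∀ a : A, Λ (star a) = star (Λ a)) ∧
        ∀ a : A, star (Λ a) * Λ a ≤ Λ (star a * a)) ↔
      ∀ a : A, ∃ C : Matrix (Fin 2) (Fin 2) B,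
        !![Λ (star a * a), Λ (star a); Λ a, 1] = C.conjTranspose * C :=
  schwarz_iff_two_by_two_matrix_positive_general Λ
end

section
/- Let A₁, A₂, B₂, C be unital C*-algebras, Φ : A₁ → A₂ a unital completely positive map, and Λ : A₂ ⊗_alg B₂ → C a Schwarz channel on the algebraic tensor product (viewed as a unital *-algebra). Then the composition Λ ∘ (Φ ⊗ id_{B₂}) : A₁ ⊗_alg B₂ → C is again a Schwarz channel. -/
/-!
Write `x = ∑ aᵢ ⊗ bᵢ`. Then `T(x⋆x) - T(x)⋆T(x) = ∑ Mᵢⱼ ⊗ bᵢ⋆bⱼ` with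
`Mᵢⱼ = Φ(aᵢ⋆aⱼ) - Φ(aᵢ)⋆Φ(aⱼ)`. The matrix `M` is the Schur complement of the corner `Φ(1) = 1`
in the Gram matrix `[Φ(aᵢ'⋆aⱼ')]` of `a' = (1, a)`, so complete positivity of `Φ` makes `M` a
positive matrix over `A₂`. For `ε > 0`, a Cholesky factorisation `M + ε = R⋆R` exhibits
`∑ (M + ε)ᵢⱼ ⊗ bᵢ⋆bⱼ` as a sum of hermitian squares `y⋆y` in the tensor product, on which the Schwarz
channel `Λ` is nonnegative; letting `ε → 0` gives `Λ(T(x)⋆T(x)) ≤ Λ(T(x⋆x))`, and the Schwarz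
inequality for `Λ` finishes the proof.
-/

open Matrix

theorem IsStrictlyPositive.exists_isSelfAdjoint_mul_self_eq_inverse {A : Type*} [CStarAlgebra A]
    [PartialOrder A] [StarOrderedRing A] {a : A}
    (ha : IsStrictlyPositive a) : ∃ s : A, IsSelfAdjoint s ∧ a * (s * s) = 1 ∧ s * s * a = 1 := by
  refine ⟨CFC.sqrt (Ring.inverse a), (CFC.sqrt_nonneg _).isSelfAdjoint, ?_⟩
  rw [CFC.sqrt_mul_sqrt_self _ ha.ringInverse.nonneg]
  exact ⟨Ring.mul_inverse_cancel a ha.isUnit, Ring.inverse_mul_cancel a ha.isUnit⟩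

namespace Matrix

variable {A : Type*}

def quadForm {n : Type*} [Fintype n] [NonUnitalSemiring A] [Star A] (M : Matrix n n A)
    (c : n → A) : A :=
  ∑ i, ∑ j, star (c i) * M i j * c j

theorem quadForm_add_smul_one {S n : Type*} [Fintype n] [DecidableEq n] [CommSemiring S]
    [Ring A] [StarRing A] [Algebra S A] (M : Matrix n n A) (ε : S) (c : n → A) :
    quadForm (M + ε • 1) c = quadForm M c + ε • ∑ i, star (c i) * c i := by
  simp [quadForm, mul_add, add_mul, Finset.sum_add_distrib, one_apply, Finset.smul_sum]

theorem isHermitian_vecMulVec_star_self {n : Type*} [Mul A] [StarMul A] (a : n → A) :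
    (vecMulVec (star a) a).IsHermitian := by
  rw [IsHermitian, conjTranspose_vecMulVec, star_star]

def schurComplementZero [Ring A] {n : ℕ} (M : Matrix (Fin (n + 1)) (Fin (n + 1)) A) (ι : A) :
    Matrix (Fin n) (Fin n) A :=
  of fun i j => M i.succ j.succ - M i.succ 0 * ι * M 0 j.succ

section Ring

variable [Ring A] [StarRing A] {n : ℕ} {M : Matrix (Fin (n + 1)) (Fin (n + 1)) A}

theorem isHermitian_schurComplementZero (hM : M.IsHermitian) {ι : A} (hι : IsSelfAdjoint ι) :
    (schurComplementZero M ι).IsHermitian :=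
  IsHermitian.ext fun i j => by
    simp only [schurComplementZero, of_apply, star_sub, star_mul, hM.apply, hι.star_eq, mul_assoc]

theorem quadForm_cons_eq_quadForm_schurComplementZero (hM : M.IsHermitian) {ι : A}
    (hι : IsSelfAdjoint ι) (hMι : M 0 0 * ι = 1) (c : Fin n → A) :
    quadForm M (Fin.cons (-(ι * ∑ j, M 0 j.succ * c j)) c) =
      quadForm (schurComplementZero M ι) c := by
  set w := ∑ j, M 0 j.succ * c j with hw_def
  have hw : ∑ i, star (c i) * M i.succ 0 = star w := by
    simp only [w, star_sum, star_mul, hM.apply]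
  have hschur : quadForm (schurComplementZero M ι) c =
      (∑ i, ∑ j, star (c i) * M i.succ j.succ * c j) - star w * ι * w := by
    rw [quadForm, ← hw, mul_assoc, hw_def, Finset.mul_sum, Finset.sum_mul_sum,
      ← Finset.sum_sub_distrib]
    refine Finset.sum_congr rfl fun i _ => ?_
    rw [← Finset.sum_sub_distrib]
    refine Finset.sum_congr rfl fun j _ => ?_
    simp only [schurComplementZero, of_apply]
    noncomm_ring
  have hcorner : -(star w * ι) * M 0 0 * -(ι * w) = star w * ι * w :=
    calc _ = star w * ι * (M 0 0 * ι) * w := by noncomm_ring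
      _ = _ := by rw [hMι, mul_one]
  have hrow : ∑ j, -(star w * ι) * M 0 j.succ * c j = -(star w * ι * w) := by
    simp only [neg_mul, Finset.sum_neg_distrib, mul_assoc, ← Finset.mul_sum]
    rfl
  rw [hschur, quadForm, Fin.sum_univ_succ]
  simp only [Fin.sum_univ_succ, Fin.cons_zero, Fin.cons_succ, Finset.sum_add_distrib,
    ← Finset.sum_mul, hw, star_neg, star_mul, hι.star_eq, hcorner, hrow]
  noncomm_ring

theorem exists_eq_conjTranspose_mul_self_of_schurComplementZero (hM : M.IsHermitian) {s : A}
    (hs : IsSelfAdjoint s) (hMs : M 0 0 * (s * s) = 1) (hsM : s * s * M 0 0 = 1)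
    {R : Matrix (Fin n) (Fin n) A} (hR : schurComplementZero M (s * s) = Rᴴ * R) :
    ∃ R' : Matrix (Fin (n + 1)) (Fin (n + 1)) A, M = R'ᴴ * R' := by
  refine ⟨of (Fin.cons (fun j => s * M 0 j) fun k => Fin.cons 0 (R k)), ?_⟩
  ext i j
  have hMi : ∀ i, star (s * M 0 i) = M i 0 * s := fun i => by
    rw [star_mul, hM.apply, hs.star_eq]
  rw [mul_apply, Fin.sum_univ_succ]
  induction i using Fin.cases <;> induction j using Fin.cases
  all_goals simp only [conjTranspose_apply, of_apply, Fin.cons_zero, Fin.cons_succ, star_zero,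
    zero_mul, mul_zero, Finset.sum_const_zero, add_zero, hMi]
  · rw [← mul_assoc, mul_assoc (M 0 0), hMs, one_mul]
  · rw [← mul_assoc, mul_assoc (M 0 0), hMs, one_mul]
  · rw [mul_assoc, ← mul_assoc s, hsM, mul_one]
  · rename_i i j
    have hRij := congrFun₂ hR i j
    simp only [schurComplementZero, of_apply, mul_apply, conjTranspose_apply] at hRij
    rw [← hRij]
    noncomm_ring

end Ring

theorem exists_eq_conjTranspose_mul_self [CStarAlgebra A] [PartialOrder A] [StarOrderedRing A]
    {n : ℕ} {M : Matrix (Fin n) (Fin n) A}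
    (hM : M.IsHermitian) {δ : ℝ} (hδ : 0 < δ)
    (hQ : ∀ c, δ • ∑ i, star (c i) * c i ≤ quadForm M c) : ∃ R, M = Rᴴ * R := by
  induction n with
  | zero => exact ⟨0, Subsingleton.elim _ _⟩
  | succ n ih =>
    have hM00 : IsStrictlyPositive (M 0 0) := by
      refine (isStrictlyPositive_algebraMap (A := A) hδ).of_le ?_
      simpa [quadForm, Pi.single_apply, apply_ite star, Algebra.algebraMap_eq_smul_one] using
        hQ (Pi.single 0 1)
    obtain ⟨s, hs, hMs, hsM⟩ := hM00.exists_isSelfAdjoint_mul_self_eq_inverse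
    have hss : IsSelfAdjoint (s * s) := by simpa [hs.star_eq] using IsSelfAdjoint.star_mul_self s
    obtain ⟨R, hR⟩ := ih (isHermitian_schurComplementZero hM hss) fun c => by
      rw [← quadForm_cons_eq_quadForm_schurComplementZero hM hss hMs]
      refine le_trans ?_ (hQ _)
      gcongr
      rw [Fin.sum_univ_succ]
      simp only [Fin.cons_succ]
      exact le_add_of_nonneg_left (star_mul_self_nonneg _)
    exact exists_eq_conjTranspose_mul_self_of_schurComplementZero hM hs hMs hsM hR

end Matrix

theorem LinearMap.map_star_of_map_star_mul_self_nonneg {A₁ A₂ : Type*} [CStarAlgebra A₁]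
    [CStarAlgebra A₂] [PartialOrder A₂] [StarOrderedRing A₂] (Φ : A₁ →ₗ[ℂ] A₂)
    (hΦ : ∀ p, 0 ≤ Φ (star p * p)) (x : A₁) : Φ (star x) = star (Φ x) := by
  let _ := CStarAlgebra.spectralOrder A₁
  have _ := CStarAlgebra.spectralOrderedRing A₁
  have hx : x ∈ Submodule.span ℂ {a : A₁ | 0 ≤ a} := by
    rw [CStarAlgebra.span_nonneg]
    exact Submodule.mem_top
  induction hx using Submodule.span_induction with
  | mem a ha =>
    obtain ⟨p, rfl⟩ := CStarAlgebra.nonneg_iff_eq_star_mul_self.mp (show 0 ≤ a from ha)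
    rw [(IsSelfAdjoint.star_mul_self p).star_eq, (hΦ p).isSelfAdjoint.star_eq]
  | zero => simp
  | add a b _ _ ha hb => rw [star_add, map_add, map_add, ha, hb, star_add]
  | smul c a _ ha => rw [star_smul, map_smul, map_smul, ha, star_smul]

theorem quadForm_map_vecMulVec_sub_nonneg {A₁ A₂ F : Type*} [Ring A₁] [StarRing A₁] [Ring A₂]
    [StarRing A₂] [PartialOrder A₂] [FunLike F A₁ A₂] [AddMonoidHomClass F A₁ A₂] (Φ : F)
    (hΦ1 : Φ 1 = 1) (hΦstar : ∀ x, Φ (star x) = star (Φ x))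
    (hΦcp : ∀ (k : ℕ) (a : Fin k → A₁) (c : Fin k → A₂),
      0 ≤ quadForm ((vecMulVec (star a) a).map Φ) c)
    {k : ℕ} (a : Fin k → A₁) (c : Fin k → A₂) :
    0 ≤ quadForm ((vecMulVec (star a) a).map Φ - vecMulVec (star (Φ ∘ a)) (Φ ∘ a)) c := by
  set a' : Fin (k + 1) → A₁ := Fin.cons 1 a
  have hN : ((vecMulVec (star a') a').map Φ).IsHermitian :=
    (isHermitian_vecMulVec_star_self a').map Φ fun x => hΦstar x
  have hN00 : (vecMulVec (star a') a').map Φ 0 0 * 1 = 1 := by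
    simp [a', vecMulVec_apply, hΦ1]
  have hN_cp := hΦcp (k + 1) a'
    (Fin.cons (-(1 * ∑ j, (vecMulVec (star a') a').map Φ 0 j.succ * c j)) c)
  rw [quadForm_cons_eq_quadForm_schurComplementZero hN (IsSelfAdjoint.one A₂) hN00 c] at hN_cp
  convert hN_cp using 2
  ext i j
  simp [a', schurComplementZero, vecMulVec_apply, hΦstar]

section TensorPairing

variable {R A B D n : Type*} [Fintype n] [CommSemiring R] [Semiring A] [Semiring B] [Semiring D]
  [Module R A] [Module R B] [Module R D] (t : A →ₗ[R] B →ₗ[R] D)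

theorem exists_eq_sum_of_span_eq_top (h : Submodule.span R {x | ∃ a b, x = t a b} = ⊤) (x : D) :
    ∃ (k : ℕ) (a : Fin k → A) (b : Fin k → B), x = ∑ i, t (a i) (b i) := by
  obtain ⟨k, c, g, hg⟩ := Submodule.mem_span_set'.mp (h ▸ Submodule.mem_top : x ∈ _)
  choose a b hab using fun i => (g i).2
  exact ⟨k, fun i => c i • a i, b, by simp only [← hg, hab, map_smul, LinearMap.smul_apply]⟩

variable [StarRing B]

def tensorPairing (b : n → B) : Matrix n n A →ₗ[R] D where
  toFun M := ∑ i, ∑ j, t (M i j) (star (b i) * b j)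
  map_add' M N := by
    simp only [Matrix.add_apply, map_add, LinearMap.add_apply, Finset.sum_add_distrib]
  map_smul' c M := by
    simp only [Matrix.smul_apply, map_smul, LinearMap.smul_apply, Finset.smul_sum,
      RingHom.id_apply]

theorem tensorPairing_apply (b : n → B) (M : Matrix n n A) :
    tensorPairing t b M = ∑ i, ∑ j, t (M i j) (star (b i) * b j) := rfl

theorem map_tensorPairing {A' D' : Type*} [Semiring A'] [Semiring D'] [Module R A']
    [Module R D'] (t' : A' →ₗ[R] B →ₗ[R] D') (Φ : A →ₗ[R] A') (T : D →ₗ[R] D')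
    (hT : ∀ a b, T (t a b) = t' (Φ a) b) (b : n → B) (M : Matrix n n A) :
    T (tensorPairing t b M) = tensorPairing t' b (M.map Φ) := by
  simp only [tensorPairing_apply, map_sum, hT, map_apply]

variable [StarRing A] [StarRing D] (hmul : ∀ a c b d, t a b * t c d = t (a * c) (b * d))
  (hstar : ∀ a b, star (t a b) = t (star a) (star b))
include hmul hstar

theorem star_sum_mul_sum_eq_tensorPairing (a : n → A) (b : n → B) :
    star (∑ i, t (a i) (b i)) * ∑ i, t (a i) (b i) = tensorPairing t b (vecMulVec (star a) a) := by
  simp only [star_sum, hstar, Finset.sum_mul_sum, hmul, tensorPairing_apply, vecMulVec_apply,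
    Pi.star_apply]

theorem tensorPairing_conjTranspose_mul_self {m : Type*} [Fintype m] (M : Matrix m n A)
    (b : n → B) :
    tensorPairing t b (Mᴴ * M) = ∑ k, star (∑ j, t (M k j) (b j)) * ∑ j, t (M k j) (b j) := by
  have hM : Mᴴ * M = ∑ k, vecMulVec (star (M k)) (M k) := by
    ext i j
    simp [mul_apply, vecMulVec_apply, Matrix.sum_apply]
  simp only [hM, map_sum, star_sum_mul_sum_eq_tensorPairing t hmul hstar]

end TensorPairing

theorem map_star_of_map_tmul {R A₁ A₂ B D₁ D₂ : Type*} [CommSemiring R] [Semiring A₁]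
    [StarRing A₁] [Semiring A₂] [StarRing A₂] [Semiring B] [StarRing B] [Semiring D₁]
    [StarRing D₁] [Semiring D₂] [StarRing D₂] [Module R A₁] [Module R A₂] [Module R B]
    [Module R D₁] [Module R D₂] (t₁ : A₁ →ₗ[R] B →ₗ[R] D₁)
    (ht₁span : Submodule.span R {x | ∃ a b, x = t₁ a b} = ⊤)
    (ht₁star : ∀ a b, star (t₁ a b) = t₁ (star a) (star b)) (t₂ : A₂ →ₗ[R] B →ₗ[R] D₂)
    (ht₂star : ∀ a b, star (t₂ a b) = t₂ (star a) (star b)) (Φ : A₁ →ₗ[R] A₂)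
    (hΦstar : ∀ a, Φ (star a) = star (Φ a)) (T : D₁ →ₗ[R] D₂)
    (hT : ∀ a b, T (t₁ a b) = t₂ (Φ a) b) (x : D₁) : T (star x) = star (T x) := by
  obtain ⟨k, a, b, rfl⟩ := exists_eq_sum_of_span_eq_top t₁ ht₁span x
  simp only [star_sum, ht₁star, map_sum, hT, hΦstar, ht₂star]

theorem nonneg_of_forall_pos_add_smul_nonneg {E : Type*} [AddCommMonoid E] [Module ℝ E]
    [TopologicalSpace E] [ContinuousAdd E] [ContinuousSMul ℝ E] [Preorder E] [ClosedIciTopology E]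
    {x y : E} (h : ∀ ε : ℝ, 0 < ε → 0 ≤ x + ε • y) : 0 ≤ x := by
  have hlim : Filter.Tendsto (fun ε : ℝ => x + ε • y) (nhdsWithin 0 (Set.Ioi 0)) (nhds x) := by
    have : Continuous fun ε : ℝ => x + ε • y := by fun_prop
    simpa using (this.tendsto 0).mono_left nhdsWithin_le_nhds
  exact ge_of_tendsto hlim (eventually_nhdsWithin_of_forall h)

theorem map_tensorPairing_nonneg {A B C D : Type*} [CStarAlgebra A]
    [PartialOrder A] [StarOrderedRing A] [Semiring B] [StarRing B] [Module ℂ B] [Ring D]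
    [StarRing D] [Module ℂ D] [CStarAlgebra C] [PartialOrder C] [StarOrderedRing C]
    (t : A →ₗ[ℂ] B →ₗ[ℂ] D) (hmul : ∀ a c b d, t a b * t c d = t (a * c) (b * d))
    (hstar : ∀ a b, star (t a b) = t (star a) (star b)) (Λ : D →ₗ[ℂ] C)
    (hΛ : ∀ y, 0 ≤ Λ (star y * y)) {k : ℕ} {M : Matrix (Fin k) (Fin k) A} (hM : M.IsHermitian)
    (hQ : ∀ c, 0 ≤ quadForm M c) (b : Fin k → B) : 0 ≤ Λ (tensorPairing t b M) := by
  refine nonneg_of_forall_pos_add_smul_nonneg (y := Λ (tensorPairing t b 1)) fun ε hε => ?_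
  obtain ⟨R, hR⟩ := exists_eq_conjTranspose_mul_self (M := M + ε • 1)
    (hM.add (isHermitian_one.smul (IsSelfAdjoint.all ε))) hε fun c => by
      rw [quadForm_add_smul_one]
      exact le_add_of_nonneg_left (hQ c)
  calc 0 ≤ ∑ i, Λ (star (∑ j, t (R i j) (b j)) * ∑ j, t (R i j) (b j)) :=
        Finset.sum_nonneg fun i _ => hΛ _
    _ = Λ (tensorPairing t b (M + ε • 1)) := by
        rw [hR, tensorPairing_conjTranspose_mul_self t hmul hstar, map_sum]
    _ = Λ (tensorPairing t b M) + ε • Λ (tensorPairing t b 1) := by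
        rw [← Complex.coe_smul, map_add, map_smul, map_add, map_smul, Complex.coe_smul]

theorem comp_schwarz_with_ucp_tensor_id_is_schwarz_general
    {A₁ A₂ B₂ C D₁ D₂ : Type*}
    [CStarAlgebra A₁] [CStarAlgebra A₂] [PartialOrder A₂] [StarOrderedRing A₂] [CStarAlgebra B₂] [CStarAlgebra C]
    [PartialOrder C] [StarOrderedRing C]
    [Ring D₁] [StarRing D₁] [Algebra ℂ D₁]
    [Ring D₂] [StarRing D₂] [Algebra ℂ D₂]
    (t₁ : A₁ →ₗ[ℂ] B₂ →ₗ[ℂ] D₁)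
    (ht₁span : Submodule.span ℂ {x : D₁ | ∃ a b, x = t₁ a b} = ⊤)
    (ht₁one : t₁ 1 1 = 1)
    (ht₁mul : ∀ (a c : A₁) (b d : B₂), t₁ a b * t₁ c d = t₁ (a * c) (b * d))
    (ht₁star : ∀ (a : A₁) (b : B₂), star (t₁ a b) = t₁ (star a) (star b))
    (t₂ : A₂ →ₗ[ℂ] B₂ →ₗ[ℂ] D₂)
    (ht₂one : t₂ 1 1 = 1)
    (ht₂mul : ∀ (a c : A₂) (b d : B₂), t₂ a b * t₂ c d = t₂ (a * c) (b * d))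
    (ht₂star : ∀ (a : A₂) (b : B₂), star (t₂ a b) = t₂ (star a) (star b))
    (Φ : A₁ →ₗ[ℂ] A₂) (hΦ1 : Φ 1 = 1)
    (hΦcp : ∀ (n : ℕ) (a : Fin n → A₁) (b : Fin n → A₂),
      0 ≤ ∑ i, ∑ j, star (b i) * Φ (star (a i) * a j) * b j)
    (T : D₁ →ₗ[ℂ] D₂) (hT : ∀ (a : A₁) (b : B₂), T (t₁ a b) = t₂ (Φ a) b)
    (Λ : D₂ →ₗ[ℂ] C) (hΛ1 : Λ 1 = 1)
    (hΛstar : ∀ x : D₂, Λ (star x) = star (Λ x))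
    (hΛsch : ∀ x : D₂, star (Λ x) * Λ x ≤ Λ (star x * x)) :
    (Λ ∘ₗ T) 1 = 1 ∧ (∀ x : D₁, (Λ ∘ₗ T) (star x) = star ((Λ ∘ₗ T) x)) ∧
      ∀ x : D₁, star ((Λ ∘ₗ T) x) * (Λ ∘ₗ T) x ≤ (Λ ∘ₗ T) (star x * x) := by
  have hΦstar : ∀ a, Φ (star a) = star (Φ a) :=
    Φ.map_star_of_map_star_mul_self_nonneg fun p => by simpa using hΦcp 1 ![p] ![1]
  have hTstar := map_star_of_map_tmul t₁ ht₁span ht₁star t₂ ht₂star Φ hΦstar T hT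
  refine ⟨?_, fun x => by simp only [LinearMap.comp_apply, hTstar, hΛstar], fun x => ?_⟩
  · rw [LinearMap.comp_apply, ← ht₁one, hT, hΦ1, ht₂one, hΛ1]
  obtain ⟨k, a, b, rfl⟩ := exists_eq_sum_of_span_eq_top t₁ ht₁span x
  have hTx : T (∑ i, t₁ (a i) (b i)) = ∑ i, t₂ ((Φ ∘ a) i) (b i) := by
    simp only [map_sum, hT, Function.comp_apply]
  have hM : ((vecMulVec (star a) a).map Φ - vecMulVec (star (Φ ∘ a)) (Φ ∘ a)).IsHermitian :=
    ((isHermitian_vecMulVec_star_self a).map Φ hΦstar).sub (isHermitian_vecMulVec_star_self _)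
  calc star ((Λ ∘ₗ T) _) * (Λ ∘ₗ T) _ ≤ Λ (star (T _) * T _) := hΛsch _
    _ ≤ Λ (T (star _ * _)) := by
      rw [← sub_nonneg, ← map_sub, hTx, star_sum_mul_sum_eq_tensorPairing t₂ ht₂mul ht₂star,
        star_sum_mul_sum_eq_tensorPairing t₁ ht₁mul ht₁star, map_tensorPairing t₁ t₂ Φ T hT,
        ← map_sub]
      exact map_tensorPairing_nonneg t₂ ht₂mul ht₂star Λ
        (fun y => (star_mul_self_nonneg _).trans (hΛsch y)) hM
        (quadForm_map_vecMulVec_sub_nonneg Φ hΦ1 hΦstar hΦcp a) b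

/-- Let `D₁ = A₁ ⊗_alg B₂` and `D₂ = A₂ ⊗_alg B₂` be the algebraic
tensor products, presented as unital *-algebras `D₁`, `D₂` together with bilinear maps
`t₁`, `t₂` (the tensor maps `(a, b) ↦ a ⊗ b`) satisfying the defining relations of the
algebraic tensor product of unital C*-algebras: simple tensors span, `1 ⊗ 1 = 1`,
`(a ⊗ b)(c ⊗ d) = ac ⊗ bd` and `(a ⊗ b)* = a* ⊗ b*`.
If `Φ : A₁ → A₂` is a unital completely positive map, `T = Φ ⊗ id` is the induced linear
map, and `Λ : D₂ → C` is a Schwarz channel into a unital C*-algebra `C`, then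
`Λ ∘ (Φ ⊗ id)` is again a Schwarz channel. -/
theorem comp_schwarz_with_ucp_tensor_id_is_schwarz
    {A₁ A₂ B₂ C D₁ D₂ : Type*}
    [CStarAlgebra A₁] [CStarAlgebra A₂] [PartialOrder A₂] [StarOrderedRing A₂] [CStarAlgebra B₂] [CStarAlgebra C]
    [PartialOrder C] [StarOrderedRing C]
    [Ring D₁] [StarRing D₁] [Algebra ℂ D₁] [StarModule ℂ D₁]
    [Ring D₂] [StarRing D₂] [Algebra ℂ D₂] [StarModule ℂ D₂]
    (t₁ : A₁ →ₗ[ℂ] B₂ →ₗ[ℂ] D₁)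
    (ht₁span : Submodule.span ℂ {x : D₁ | ∃ a b, x = t₁ a b} = ⊤)
    (ht₁one : t₁ 1 1 = 1)
    (ht₁mul : ∀ (a c : A₁) (b d : B₂), t₁ a b * t₁ c d = t₁ (a * c) (b * d))
    (ht₁star : ∀ (a : A₁) (b : B₂), star (t₁ a b) = t₁ (star a) (star b))
    (t₂ : A₂ →ₗ[ℂ] B₂ →ₗ[ℂ] D₂)
    (ht₂span : Submodule.span ℂ {x : D₂ | ∃ a b, x = t₂ a b} = ⊤)
    (ht₂one : t₂ 1 1 = 1)
    (ht₂mul : ∀ (a c : A₂) (b d : B₂), t₂ a b * t₂ c d = t₂ (a * c) (b * d))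
    (ht₂star : ∀ (a : A₂) (b : B₂), star (t₂ a b) = t₂ (star a) (star b))
    (Φ : A₁ →ₗ[ℂ] A₂) (hΦ1 : Φ 1 = 1)
    (hΦcp : ∀ (n : ℕ) (a : Fin n → A₁) (b : Fin n → A₂),
      0 ≤ ∑ i, ∑ j, star (b i) * Φ (star (a i) * a j) * b j)
    (T : D₁ →ₗ[ℂ] D₂) (hT : ∀ (a : A₁) (b : B₂), T (t₁ a b) = t₂ (Φ a) b)
    (Λ : D₂ →ₗ[ℂ] C) (hΛ1 : Λ 1 = 1)
    (hΛstar : ∀ x : D₂, Λ (star x) = star (Λ x))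
    (hΛsch : ∀ x : D₂, star (Λ x) * Λ x ≤ Λ (star x * x)) :
    (Λ ∘ₗ T) 1 = 1 ∧ (∀ x : D₁, (Λ ∘ₗ T) (star x) = star ((Λ ∘ₗ T) x)) ∧
      ∀ x : D₁, star ((Λ ∘ₗ T) x) * (Λ ∘ₗ T) x ≤ (Λ ∘ₗ T) (star x * x) :=
  comp_schwarz_with_ucp_tensor_id_is_schwarz_general t₁ ht₁span ht₁one ht₁mul ht₁star t₂ ht₂one
    ht₂mul ht₂star Φ hΦ1 hΦcp T hT Λ hΛ1 hΛstar hΛsch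
end
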